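/- Let D be a c-uniform rectifiably connected noncomplete metric space. Then for all x, y ∈ D, k_D(x,y) ≤ 4c²·log(1 + d(x,y)/min{d_D(x), d_D(y)}). -/

import Mathlib

/-! Let `α` be a uniform arc from `x` to `y`, of length `L ≤ c d(x,y)`; reversing it, it suffices
to bound the quasihyperbolic length of its first half. There `d_D(α u) ≥ d_D(x) - u`, since `d_D`
is `1`-Lipschitz, and `d_D(α u) ≥ u / c` by the cone condition. The first bound gives
`1 / d_D ≤ 2 / d_D(x)` for `u ≤ d_D(x) / 2`, the second `1 / d_D ≤ c / u` beyond, so the half has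
length at most `1 + c log (L / d_D(x)) ≤ 2c log (1 + L / d_D(x))`. Finally Bernoulli's inequality
gives `log (1 + c t) ≤ c log (1 + t)`. -/

open Set Metric

noncomputable section

variable {D : Type*} [MetricSpace D]

/-- Distance from a point to the metric boundary `∂D = D̄ \ D`. -/
def dB (x : D) : ℝ :=
  Metric.infDist (x : UniformSpace.Completion D)
    ((Set.range ((↑) : D → UniformSpace.Completion D))ᶜ)

/-- A rectifiable curve from `x` to `y`, given in (1-Lipschitz) arclength
parametrization on `[0, L]`; `L` is its length. -/
structure Curve (D : Type*) [MetricSpace D] (x y : D) where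
  L : ℝ
  hL : 0 ≤ L
  γ : ℝ → D
  lip : LipschitzOnWith 1 γ (Set.Icc 0 L)
  h0 : γ 0 = x
  h1 : γ L = y

/-- Quasihyperbolic length of the subarc with parameters in `[s,t]`. -/
def Curve.qhLenOn {x y : D} (c : Curve D x y) (s t : ℝ) : ℝ :=
  ∫ u in s..t, 1 / dB (c.γ u)

/-- Quasihyperbolic length of a curve. -/
def Curve.qhLen {x y : D} (c : Curve D x y) : ℝ := c.qhLenOn 0 c.L

/-- The quasihyperbolic distance: infimum of quasihyperbolic lengths of curves. -/
def qhDist (x y : D) : ℝ := sInf {r : ℝ | ∃ c : Curve D x y, r = c.qhLen}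

/-- Every pair of points is joined by a rectifiable curve. -/
def RectConnected (D : Type*) [MetricSpace D] : Prop :=
  ∀ x y : D, Nonempty (Curve D x y)

/-- A length space: distance is the infimum of lengths of joining curves. -/
def IsLengthSpace (D : Type*) [MetricSpace D] : Prop :=
  ∀ x y : D, ∀ ε > 0, ∃ c : Curve D x y, c.L ≤ dist x y + ε

/-- A quasihyperbolic geodesic. -/
def Curve.IsQHGeodesic {x y : D} (c : Curve D x y) : Prop :=
  ∀ s t : ℝ, s ∈ Set.Icc 0 c.L → t ∈ Set.Icc 0 c.L → s ≤ t →
    c.qhLenOn s t = qhDist (c.γ s) (c.γ t)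

/-- An `a`-cone arc: `min{ℓ(α[x,z]), ℓ(α[z,y])} ≤ a·d_D(z)` for all `z` on the arc. -/
def Curve.IsConeArc {x y : D} (c : Curve D x y) (a : ℝ) : Prop :=
  ∀ t ∈ Set.Icc 0 c.L, min t (c.L - t) ≤ a * dB (c.γ t)

/-- A `(λ,μ)`-quasigeodesic with respect to the quasihyperbolic metric. -/
def Curve.IsQuasigeodesic {x y : D} (c : Curve D x y) (lam mu : ℝ) : Prop :=
  ∀ s t : ℝ, s ∈ Set.Icc 0 c.L → t ∈ Set.Icc 0 c.L → s ≤ t →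
    c.qhLenOn s t ≤ lam * qhDist (c.γ s) (c.γ t) + mu

/-- An `a`-John space. -/
def IsJohn (D : Type*) [MetricSpace D] (a : ℝ) : Prop :=
  ∀ x y : D, ∃ c : Curve D x y, c.IsConeArc a

/-- A `c`-uniform space. -/
def IsUniform (D : Type*) [MetricSpace D] (c : ℝ) : Prop :=
  ∀ x y : D, ∃ α : Curve D x y, α.L ≤ c * dist x y ∧ α.IsConeArc c

/-- Gromov product with respect to the quasihyperbolic metric. -/
def gromovProd (x y w : D) : ℝ := (qhDist x w + qhDist y w - qhDist x y) / 2

/-- `(D,k)` is Gromov `δ`-hyperbolic (four-point condition). -/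
def QHHyperbolic (D : Type*) [MetricSpace D] (δ : ℝ) : Prop :=
  ∀ x y z w : D, min (gromovProd x y w) (gromovProd y z w) - δ ≤ gromovProd x z w

/-- `(D,k)` is `K`-roughly starlike with respect to `w`. -/
def RoughlyStarlike (D : Type*) [MetricSpace D] (K : ℝ) (w : D) : Prop :=
  ∀ x : D, ∃ γ : ℝ → D, γ 0 = w ∧
    (∀ s t : ℝ, 0 ≤ s → 0 ≤ t → qhDist (γ s) (γ t) = |s - t|) ∧
    ∃ t : ℝ, 0 ≤ t ∧ qhDist x (γ t) ≤ K

/-- The `h`-coarse quasihyperbolic length of the part of the curve `β` with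
parameters in `[s,t]`. -/
def coarseLen {E : Type*} [MetricSpace E] (β : ℝ → E) (s t h : ℝ) : ℝ :=
  sSup {r : ℝ | ∃ n : ℕ, ∃ u : Fin (n + 1) → ℝ, Monotone u ∧
    (∀ i, u i ∈ Set.Icc s t) ∧
    (∀ i : Fin n, h ≤ qhDist (β (u i.castSucc)) (β (u i.succ))) ∧
    r = ∑ i : Fin n, qhDist (β (u i.castSucc)) (β (u i.succ))}

/-- `λ`-annular quasiconvexity. -/
def AnnularQuasiconvex (X : Type*) [MetricSpace X] (lam : ℝ) : Prop :=
  ∀ (x : X) (r r' : ℝ), 0 < r' → r' < r →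
    ∀ y z : X, y ∈ Metric.ball x r \ Metric.ball x r' →
      z ∈ Metric.ball x r \ Metric.ball x r' →
      ∃ c : Curve X y z, c.L ≤ lam * dist y z ∧
        ∀ t ∈ Set.Icc 0 c.L, c.γ t ∈ Metric.ball x (lam * r) \ Metric.ball x (r' / lam)

end

open Real MeasureTheory

lemma le_two_mul_log_one_add {s : ℝ} (hs : 0 ≤ s) (hs1 : s ≤ 1) : s ≤ 2 * log (1 + s) := by
  have h := one_sub_inv_le_log_of_pos (by linarith : 0 < 1 + s)
  have h' : 1 - (1 + s)⁻¹ = s / (1 + s) := by field_simp; ring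
  have : s / 2 ≤ s / (1 + s) := div_le_div_of_nonneg_left hs (by linarith) (by linarith)
  linarith

lemma one_add_log_le_two_mul_log_one_add {t : ℝ} (ht : 1 ≤ t) : 1 + log t ≤ 2 * log (1 + t) := by
  have h4 : 1 ≤ log 4 := by
    rw [le_log_iff_exp_le (by norm_num)]
    linarith [exp_one_lt_d9]
  calc 1 + log t ≤ log 4 + log t := by linarith
    _ = log (4 * t) := (log_mul (by norm_num) (by positivity)).symm
    _ ≤ log ((1 + t) ^ 2) := log_le_log (by positivity) (by nlinarith [sq_nonneg (1 - t)])
    _ = 2 * log (1 + t) := by rw [log_pow]; norm_num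

lemma log_one_add_mul_le {c t : ℝ} (hc : 1 ≤ c) (ht : 0 ≤ t) :
    log (1 + c * t) ≤ c * log (1 + t) := by
  rw [← log_rpow (by linarith)]
  exact log_le_log (by positivity) (one_add_mul_self_le_rpow_one_add (by linarith) hc)

lemma not_intervalIntegrable_of_inv_le {f : ℝ → ℝ} {b : ℝ} (hb : 0 < b)
    (hf : ∀ u ∈ Ioc 0 b, u⁻¹ ≤ f u) : ¬ IntervalIntegrable f volume 0 b := by
  intro h
  have hinv : IntervalIntegrable (fun u => u⁻¹) volume 0 b := by
    refine h.mono_fun' measurable_inv.aestronglyMeasurable ?_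
    rw [uIoc_of_le hb.le]
    filter_upwards [ae_restrict_mem measurableSet_Ioc] with u hu
    rw [norm_of_nonneg (inv_nonneg.2 hu.1.le)]
    exact hf u hu
  rcases intervalIntegrable_inv_iff.1 hinv with h0 | h0
  · exact hb.ne h0
  · exact h0 left_mem_uIcc

section IntegralBounds

variable {g : ℝ → ℝ} {a c : ℝ}

lemma integral_one_div_le_of_sub_le {b : ℝ} (ha : 0 < a) (hb : 0 ≤ b) (hba : b ≤ a / 2)
    (hg : IntervalIntegrable (fun u => 1 / g u) volume 0 b)
    (hnear : ∀ u ∈ Icc 0 b, a - u ≤ g u) :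
    ∫ u in 0..b, 1 / g u ≤ 2 * b / a := by
  have hbound : ∀ u ∈ Icc 0 b, 1 / g u ≤ 2 / a := fun u hu => by
    calc 1 / g u ≤ 1 / (a / 2) :=
          one_div_le_one_div_of_le (half_pos ha) (by linarith [hnear u hu, hu.2])
      _ = 2 / a := one_div_div a 2
  have := intervalIntegral.integral_mono_on hb hg intervalIntegrable_const hbound
  rwa [intervalIntegral.integral_const, smul_eq_mul, sub_zero, ← mul_div_assoc, mul_comm] at this

lemma integral_one_div_le_of_le_mul {s t : ℝ} (hc : 0 < c) (hs : 0 < s) (hst : s ≤ t)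
    (hg : IntervalIntegrable (fun u => 1 / g u) volume s t)
    (hfar : ∀ u ∈ Icc s t, u ≤ c * g u) :
    ∫ u in s..t, 1 / g u ≤ c * log (t / s) := by
  have hbound : ∀ u ∈ Icc s t, 1 / g u ≤ c * u⁻¹ := fun u hu => by
    have hu0 : 0 < u := hs.trans_le hu.1
    calc 1 / g u = c / (c * g u) := by rw [div_mul_cancel_left₀ hc.ne', one_div]
      _ ≤ c / u := div_le_div_of_nonneg_left hc.le hu0 (hfar u hu)
      _ = c * u⁻¹ := div_eq_mul_inv c u
  have hinv : IntervalIntegrable (fun u => c * u⁻¹) volume s t := by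
    refine (continuousOn_const.mul (continuousOn_inv₀.mono ?_)).intervalIntegrable
    intro u hu
    rw [uIcc_of_le hst] at hu
    exact (hs.trans_le hu.1).ne'
  have := intervalIntegral.integral_mono_on hst hg hinv hbound
  rwa [intervalIntegral.integral_const_mul, integral_inv_of_pos hs (hs.trans_le hst)] at this

lemma integral_one_div_le_two_mul_log {L : ℝ} (hc : 1 ≤ c) (ha : 0 < a) (hL : 0 ≤ L)
    (hg : ContinuousOn g (Icc 0 (L / 2)))
    (hnear : ∀ u ∈ Icc 0 (L / 2), a - u ≤ g u) (hfar : ∀ u ∈ Icc 0 (L / 2), u ≤ c * g u) :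
    ∫ u in 0..L / 2, 1 / g u ≤ 2 * c * log (1 + L / a) := by
  have hpos : ∀ u ∈ Icc 0 (L / 2), 0 < g u := fun u hu => by
    by_contra! h
    nlinarith [hnear u hu, hfar u hu]
  have hf : ContinuousOn (fun u => 1 / g u) (Icc 0 (L / 2)) :=
    continuousOn_const.div hg fun u hu => (hpos u hu).ne'
  have hlog : 0 ≤ log (1 + L / a) := log_nonneg (by have := div_nonneg hL ha.le; linarith)
  rcases le_or_gt L a with hLa | haL
  · calc ∫ u in 0..L / 2, 1 / g u ≤ 2 * (L / 2) / a :=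
          integral_one_div_le_of_sub_le ha (by positivity) (by linarith)
            (hf.intervalIntegrable_of_Icc (by positivity)) hnear
      _ = L / a := by ring
      _ ≤ 2 * log (1 + L / a) := le_two_mul_log_one_add (by positivity) ((div_le_one ha).2 hLa)
      _ ≤ 2 * c * log (1 + L / a) := by nlinarith
  · have hsplit : a / 2 ≤ L / 2 := by linarith
    have hnear' : ∀ u ∈ Icc 0 (a / 2), a - u ≤ g u := fun u hu => hnear u ⟨hu.1, hu.2.trans hsplit⟩
    have hfar' : ∀ u ∈ Icc (a / 2) (L / 2), u ≤ c * g u :=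
      fun u hu => hfar u ⟨(half_pos ha).le.trans hu.1, hu.2⟩
    have hint₁ : IntervalIntegrable (fun u => 1 / g u) volume 0 (a / 2) :=
      (hf.mono (Icc_subset_Icc le_rfl hsplit)).intervalIntegrable_of_Icc (half_pos ha).le
    have hint₂ : IntervalIntegrable (fun u => 1 / g u) volume (a / 2) (L / 2) :=
      (hf.mono (Icc_subset_Icc (half_pos ha).le le_rfl)).intervalIntegrable_of_Icc hsplit
    have hLa : 1 ≤ L / a := (one_le_div ha).2 haL.le
    rw [← intervalIntegral.integral_add_adjacent_intervals hint₁ hint₂]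
    calc (∫ u in 0..a / 2, 1 / g u) + ∫ u in a / 2..L / 2, 1 / g u
        ≤ 2 * (a / 2) / a + c * log ((L / 2) / (a / 2)) :=
          add_le_add (integral_one_div_le_of_sub_le ha (half_pos ha).le le_rfl hint₁ hnear')
            (integral_one_div_le_of_le_mul (by linarith) (half_pos ha) hsplit hint₂ hfar')
      _ = 1 + c * log (L / a) := by
          rw [div_div_div_cancel_right₀ two_ne_zero]
          field_simp
      _ ≤ c * (1 + log (L / a)) := by nlinarith [log_nonneg hLa]
      _ ≤ c * (2 * log (1 + L / a)) :=
          mul_le_mul_of_nonneg_left (one_add_log_le_two_mul_log_one_add hLa) (by linarith)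
      _ = 2 * c * log (1 + L / a) := by ring

end IntegralBounds

section QuasihyperbolicLength

variable {D : Type*} [MetricSpace D]

lemma dB_nonneg (x : D) : 0 ≤ dB x := infDist_nonneg

lemma lipschitzWith_dB : LipschitzWith 1 (dB : D → ℝ) :=
  one_mul (1 : NNReal) ▸
    (lipschitz_infDist_pt _).comp UniformSpace.Completion.coe_isometry.lipschitz

lemma dB_le_dB_add_dist (a b : D) : dB a ≤ dB b + dist a b := by
  simpa using lipschitzWith_dB.le_add_mul a b

lemma qhDist_le_qhLen {x y : D} (α : Curve D x y) : qhDist x y ≤ α.qhLen :=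
  csInf_le ⟨0, by
    rintro r ⟨β, rfl⟩
    exact intervalIntegral.integral_nonneg β.hL fun u _ => one_div_nonneg.2 (dB_nonneg _)⟩ ⟨α, rfl⟩

namespace Curve

variable {x y : D} (α : Curve D x y)

lemma dist_le {s t : ℝ} (hs : s ∈ Icc 0 α.L) (ht : t ∈ Icc 0 α.L) :
    dist (α.γ s) (α.γ t) ≤ |s - t| := by
  simpa [Real.dist_eq] using α.lip.dist_le_mul s hs t ht

lemma dB_start_sub_le {u : ℝ} (hu : u ∈ Icc 0 α.L) : dB x - u ≤ dB (α.γ u) := by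
  have h := α.dist_le ⟨le_rfl, α.hL⟩ hu
  rw [α.h0, zero_sub, abs_neg, abs_of_nonneg hu.1] at h
  linarith [dB_le_dB_add_dist x (α.γ u)]

lemma dB_end_sub_le {u : ℝ} (hu : u ∈ Icc 0 α.L) : dB y - (α.L - u) ≤ dB (α.γ u) := by
  have h := α.dist_le ⟨α.hL, le_rfl⟩ hu
  rw [α.h1, abs_of_nonneg (sub_nonneg.2 hu.2)] at h
  linarith [dB_le_dB_add_dist y (α.γ u)]

def symm : Curve D y x where
  L := α.L
  hL := α.hL
  γ u := α.γ (α.L - u)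
  lip := LipschitzOnWith.of_dist_le_mul fun s hs t ht => by
    have mem : ∀ u ∈ Icc 0 α.L, α.L - u ∈ Icc 0 α.L :=
      fun u hu => ⟨by linarith [hu.2], by linarith [hu.1]⟩
    simpa [Real.dist_eq, abs_sub_comm] using α.dist_le (mem s hs) (mem t ht)
  h0 := by simp [α.h1]
  h1 := by simp [α.h0]

@[simp] lemma symm_L : α.symm.L = α.L := rfl

lemma qhLenOn_symm (s t : ℝ) : α.symm.qhLenOn s t = α.qhLenOn (α.L - t) (α.L - s) :=
  intervalIntegral.integral_comp_sub_left (fun u => 1 / dB (α.γ u)) α.L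

lemma qhLen_symm : α.symm.qhLen = α.qhLen := by
  rw [qhLen, qhLenOn_symm, symm_L, sub_self, sub_zero, qhLen]

variable {α} {c : ℝ}

lemma IsConeArc.symm (h : α.IsConeArc c) : α.symm.IsConeArc c := fun t ⟨ht0, htL⟩ => by
  change t ≤ α.L at htL
  have := h (α.L - t) ⟨by linarith, by linarith⟩
  rwa [sub_sub_cancel, min_comm] at this

lemma half_mem_uIcc : α.L / 2 ∈ uIcc 0 α.L :=
  mem_uIcc_of_le (by linarith [α.hL]) (by linarith [α.hL])

lemma qhLenOn_zero_half_le (hc : 1 ≤ c) (h : α.IsConeArc c) (hx : 0 < dB x) :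
    α.qhLenOn 0 (α.L / 2) ≤ 2 * c * log (1 + α.L / dB x) := by
  have hsub : Icc 0 (α.L / 2) ⊆ Icc 0 α.L := Icc_subset_Icc le_rfl (by linarith [α.hL])
  refine integral_one_div_le_two_mul_log hc hx α.hL
    ((lipschitzWith_dB.continuous.comp_continuousOn α.lip.continuousOn).mono hsub)
    (fun u hu => α.dB_start_sub_le (hsub hu)) fun u hu => ?_
  have := h u (hsub hu)
  rwa [min_eq_left (by linarith [hu.2])] at this

lemma dB_pos (hc : 0 < c) (h : α.IsConeArc c) (hx : 0 < dB x) (hy : 0 < dB y) :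
    ∀ u ∈ Icc 0 α.L, 0 < dB (α.γ u) := fun u hu => by
  by_contra! hu0
  have hstart := α.dB_start_sub_le hu
  have hend := α.dB_end_sub_le hu
  have := h u hu
  have : 0 < min u (α.L - u) := lt_min (by linarith) (by linarith)
  nlinarith

lemma qhLen_le (hc : 1 ≤ c) (h : α.IsConeArc c) (hm : 0 < min (dB x) (dB y)) :
    α.qhLen ≤ 4 * c * log (1 + α.L / min (dB x) (dB y)) := by
  have hx : 0 < dB x := hm.trans_le (min_le_left _ _)
  have hy : 0 < dB y := hm.trans_le (min_le_right _ _)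
  have hint : IntervalIntegrable (fun u => 1 / dB (α.γ u)) volume 0 α.L :=
    (continuousOn_const.div (lipschitzWith_dB.continuous.comp_continuousOn α.lip.continuousOn)
      fun u hu => (α.dB_pos (by linarith) h hx hy u hu).ne').intervalIntegrable_of_Icc α.hL
  have hsplit : α.qhLen = α.qhLenOn 0 (α.L / 2) + α.symm.qhLenOn 0 (α.symm.L / 2) := by
    rw [qhLenOn_symm, symm_L, sub_zero, sub_half]
    exact (intervalIntegral.integral_add_adjacent_intervals
      (hint.mono_set (uIcc_subset_uIcc left_mem_uIcc α.half_mem_uIcc))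
      (hint.mono_set (uIcc_subset_uIcc α.half_mem_uIcc right_mem_uIcc))).symm
  have hlog : ∀ b, min (dB x) (dB y) ≤ b →
      2 * c * log (1 + α.L / b) ≤ 2 * c * log (1 + α.L / min (dB x) (dB y)) := fun b hb => by
    have hL := α.hL
    have hLb := div_nonneg hL (hm.trans_le hb).le
    gcongr
  have h₁ := α.qhLenOn_zero_half_le hc h hx
  have h₂ := α.symm.qhLenOn_zero_half_le hc h.symm hy
  rw [symm_L] at h₂ hsplit
  linarith [hlog _ (min_le_left _ _), hlog _ (min_le_right _ _)]

/-- Near `x` the integrand is at least `1 / u`, so it is not integrable and the integral takes the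
junk value `0`. -/
lemma qhLen_eq_zero_of_dB_eq_zero (hc : 0 < c) (h : α.IsConeArc c) (hx : dB x = 0) :
    α.qhLen = 0 := by
  rcases α.hL.eq_or_lt with hL | hL
  · rw [qhLen, qhLenOn, ← hL, intervalIntegral.integral_same]
  refine intervalIntegral.integral_undef fun hint => not_intervalIntegrable_of_inv_le (half_pos hL)
    (fun u hu => ?_) (hint.mono_set (uIcc_subset_uIcc left_mem_uIcc α.half_mem_uIcc))
  have hu' : u ∈ Icc 0 α.L := ⟨hu.1.le, by linarith [hu.2]⟩
  have hcone := h u hu'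
  rw [min_eq_left (by linarith [hu.2])] at hcone
  have hpos : 0 < dB (α.γ u) := by nlinarith [hu.1]
  have hle : dB (α.γ u) ≤ u := by
    have := α.dist_le hu' ⟨le_rfl, α.hL⟩
    rw [α.h0, sub_zero, abs_of_pos hu.1] at this
    linarith [dB_le_dB_add_dist (α.γ u) x]
  rw [one_div]
  exact inv_anti₀ hpos hle

lemma qhLen_eq_zero_of_min_dB_eq_zero (hc : 0 < c) (h : α.IsConeArc c)
    (hm : min (dB x) (dB y) = 0) : α.qhLen = 0 := by
  rcases min_eq_iff.1 hm with ⟨hx, -⟩ | ⟨hy, -⟩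
  · exact α.qhLen_eq_zero_of_dB_eq_zero hc h hx
  · rw [← qhLen_symm]
    exact α.symm.qhLen_eq_zero_of_dB_eq_zero hc h.symm hy

end Curve

end QuasihyperbolicLength

theorem stmt8_general {D : Type*} [MetricSpace D]
    (c : ℝ) (hc : 1 ≤ c) (hu : IsUniform D c) (x y : D) :
    qhDist x y ≤ 4 * c ^ 2 * Real.log (1 + dist x y / min (dB x) (dB y)) := by
  obtain ⟨α, hαL, hα⟩ := hu x y
  rcases (le_min (dB_nonneg x) (dB_nonneg y)).eq_or_lt with hm | hm
  · rw [← hm, div_zero, add_zero, log_one, mul_zero]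
    exact (qhDist_le_qhLen α).trans (α.qhLen_eq_zero_of_min_dB_eq_zero (by linarith) hα hm.symm).le
  set m := min (dB x) (dB y)
  have hLm := div_nonneg α.hL hm.le
  calc qhDist x y ≤ α.qhLen := qhDist_le_qhLen α
    _ ≤ 4 * c * log (1 + α.L / m) := α.qhLen_le hc hα hm
    _ ≤ 4 * c * log (1 + c * (dist x y / m)) := by
        rw [← mul_div_assoc]
        gcongr
    _ ≤ 4 * c * (c * log (1 + dist x y / m)) := by
        gcongr
        exact log_one_add_mul_le hc (by positivity)
    _ = 4 * c ^ 2 * log (1 + dist x y / m) := by ring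

/-- in a `c`-uniform space,
`k_D(x,y) ≤ 4c²·log(1 + d(x,y)/min{d_D(x), d_D(y)})`. -/
theorem stmt8 {D : Type*} [MetricSpace D]
    (hrc : RectConnected D) (hnc : ¬ CompleteSpace D)
    (c : ℝ) (hc : 1 ≤ c) (hu : IsUniform D c) (x y : D) :
    qhDist x y ≤ 4 * c ^ 2 * Real.log (1 + dist x y / min (dB x) (dB y)) :=
  stmt8_general c hc hu x y
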